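/- Let P be an orthogonal projection on a finite-dimensional complex Hilbert space H with codespace C = range(P), let {E_i}_{i∈I} be a finite family of operators with a sign function s : I → {+1,−1}, and suppose E[P] := Σ_i s(i) E_i P E_i† is positive definite. Define R_i := P E_i† E[P]^{−1/2}, and suppose the exact error-correction conditions hold: P E_i† E[P]^{−1/2} E_j P = β_{ij} P for complex scalars β_{ij} (i.e. the traceless parts Δ_{ij} all vanish), and Σ_{i,j} s(i)s(j) P E_i† R_j† R_j E_i P = P. Then the Petz map recovers every code state perfectly: for every unit vector ψ ∈ C, ⟨ψ, ( Σ_{i,j} s(i) s(j) R_j E_i |ψ⟩⟨ψ| E_i† R_j† ) ψ⟩ = 1. -/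

import Mathlib

open Matrix BigOperators
open scoped ComplexOrder

/-- The positive semidefinite square root of a positive semidefinite matrix
(Mathlib's former `Matrix.PosSemidef.sqrt`, restated with its old definition). -/
noncomputable def Matrix.PosSemidef.sqrt {n 𝕜 : Type*} [Fintype n] [RCLike 𝕜] [DecidableEq n]
    {A : Matrix n n 𝕜} (hA : A.PosSemidef) : Matrix n n 𝕜 :=
  hA.1.eigenvectorUnitary.1 * diagonal ((↑) ∘ (√·) ∘ hA.1.eigenvalues) *
  (star hA.1.eigenvectorUnitary : Matrix n n 𝕜)

lemma vecMulVec_mulVec' {n : Type*} [Fintype n] (w v x : n → ℂ) :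
    vecMulVec w v *ᵥ x = (v ⬝ᵥ x) • w := by
  ext i
  simp [vecMulVec, mulVec, dotProduct, Finset.mul_sum, mul_comm, mul_assoc, mul_left_comm]

lemma mul_vecMulVec' {n : Type*} [Fintype n] [DecidableEq n] (A : Matrix n n ℂ) (w v : n → ℂ) :
    A * vecMulVec w v = vecMulVec (A *ᵥ w) v := by
  ext i j
  simp [vecMulVec, Matrix.mul_apply, mulVec, dotProduct, Finset.sum_mul, mul_assoc]

lemma vecMulVec_mul' {n : Type*} [Fintype n] [DecidableEq n] (A : Matrix n n ℂ) (w v : n → ℂ) :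
    vecMulVec w v * A = vecMulVec w (v ᵥ* A) := by
  ext i j
  simp [vecMulVec, Matrix.mul_apply, vecMul, dotProduct, Finset.mul_sum, mul_assoc]

/-- If the exact error-correction conditions hold
(`P (E i)† E[P]^{-1/2} (E j) P = β_{ij} P`, i.e. all traceless parts vanish) together
with the signed completeness relation on the codespace, then the Petz map recovers
every code state perfectly: the fidelity equals `1`. -/
theorem petz_perfect_recovery
    {n I : Type*} [Fintype n] [DecidableEq n] [Fintype I]
    (P : Matrix n n ℂ) (hPherm : P.IsHermitian) (hPproj : P * P = P)
    (E : I → Matrix n n ℂ)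
    (s : I → ℝ) (hs : ∀ i, s i = 1 ∨ s i = -1)
    (EP : Matrix n n ℂ)
    (hEPdef : EP = ∑ i : I, (s i : ℂ) • (E i * P * (E i)ᴴ))
    (hEP : EP.PosDef)
    (R : I → Matrix n n ℂ)
    (hR : ∀ i, R i = P * (E i)ᴴ * (hEP.posSemidef.sqrt)⁻¹)
    (β : I → I → ℂ)
    (hQEC : ∀ i j, P * (E i)ᴴ * (hEP.posSemidef.sqrt)⁻¹ * E j * P = β i j • P)
    (hcomp : ∑ i : I, ∑ j : I, ((s i : ℂ) * (s j : ℂ)) •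
        (P * (E i)ᴴ * (R j)ᴴ * R j * E i * P) = P)
    (ψ : n → ℂ) (hψunit : star ψ ⬝ᵥ ψ = 1) (hψcode : P *ᵥ ψ = ψ) :
    star ψ ⬝ᵥ
      ((∑ i : I, ∑ j : I, ((s i : ℂ) * (s j : ℂ)) •
        (R j * E i * vecMulVec ψ (star ψ) * (E i)ᴴ * (R j)ᴴ)) *ᵥ ψ) = 1 := by
  set V : Matrix n n ℂ := vecMulVec ψ (star ψ) with hV
  have hstarcode : star ψ ᵥ* P = star ψ := by
    have : star ψ ᵥ* P = star (Pᴴ *ᵥ ψ) := by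
      ext k
      simp [vecMul, mulVec, dotProduct, conjTranspose_apply, mul_comm]
    rw [this, hPherm.eq, hψcode]
  have hPV : P * V = V := by
    rw [hV, mul_vecMulVec', hψcode]
  have hVP : V * P = V := by
    rw [hV, vecMulVec_mul', hstarcode]
  -- key identities
  have h1 : ∀ i j, R j * E i * P = β j i • P := by
    intro i j
    rw [hR]
    exact hQEC j i
  have h2 : ∀ i j, P * ((E i)ᴴ * (R j)ᴴ) = (starRingEnd ℂ) (β j i) • P := by
    intro i j
    have := congrArg conjTranspose (h1 i j)
    simpa [Matrix.conjTranspose_mul, Matrix.conjTranspose_smul, hPherm.eq, mul_assoc]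
      using this
  have h2V : ∀ i j, V * ((E i)ᴴ * (R j)ᴴ) = (starRingEnd ℂ) (β j i) • V := by
    intro i j
    calc V * ((E i)ᴴ * (R j)ᴴ)
        = V * (P * ((E i)ᴴ * (R j)ᴴ)) := by
          conv_lhs => rw [← hVP]
          rw [mul_assoc]
      _ = (starRingEnd ℂ) (β j i) • (V * P) := by rw [h2, Matrix.mul_smul]
      _ = (starRingEnd ℂ) (β j i) • V := by rw [hVP]
  -- each completeness term
  have hterm1 : ∀ i j, P * (E i)ᴴ * (R j)ᴴ * R j * E i * P
      = ((starRingEnd ℂ) (β j i) * β j i) • P := by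
    intro i j
    calc P * (E i)ᴴ * (R j)ᴴ * R j * E i * P
        = (P * ((E i)ᴴ * (R j)ᴴ)) * (R j * E i * P) := by
          simp only [mul_assoc]
      _ = ((starRingEnd ℂ) (β j i) • P) * (β j i • P) := by rw [h1, h2]
      _ = ((starRingEnd ℂ) (β j i) * β j i) • P := by
          rw [Matrix.smul_mul, Matrix.mul_smul, hPproj, smul_smul]
  -- each fidelity term
  have hterm2 : ∀ i j, R j * E i * V * (E i)ᴴ * (R j)ᴴ
      = ((starRingEnd ℂ) (β j i) * β j i) • V := by
    intro i j
    calc R j * E i * V * (E i)ᴴ * (R j)ᴴ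
        = (R j * E i * P) * (V * ((E i)ᴴ * (R j)ᴴ)) := by
          conv_lhs => rw [← hPV]
          simp only [mul_assoc]
      _ = (β j i • P) * ((starRingEnd ℂ) (β j i) • V) := by rw [h1, h2V]
      _ = ((starRingEnd ℂ) (β j i) * β j i) • (P * V) := by
          rw [Matrix.smul_mul, Matrix.mul_smul, smul_smul, mul_comm]
      _ = ((starRingEnd ℂ) (β j i) * β j i) • V := by rw [hPV]
  have hPψ1 : star ψ ⬝ᵥ (P *ᵥ ψ) = 1 := by rw [hψcode]; exact hψunit
  -- the scalar sum equals 1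
  have hsum : (∑ i : I, ∑ j : I, (s i : ℂ) * (s j : ℂ) *
      ((starRingEnd ℂ) (β j i) * β j i)) = 1 := by
    have h := congrArg (fun M : Matrix n n ℂ => star ψ ⬝ᵥ (M *ᵥ ψ)) hcomp
    simp only [hterm1, smul_smul, ← Finset.sum_smul, Matrix.smul_mulVec,
      dotProduct_smul, hPψ1, smul_eq_mul, mul_one] at h
    exact h
  have hVψ : V *ᵥ ψ = ψ := by
    rw [hV, vecMulVec_mulVec', hψunit, one_smul]
  simp only [hterm2, smul_smul, ← Finset.sum_smul, Matrix.smul_mulVec,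
    dotProduct_smul, hVψ, hψunit, smul_eq_mul, mul_one]
  exact hsum
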